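/- Existence for the multiparticle Skorohod system: fix T > 0, an integer n ≥ 1, continuous functions f₁, …, f_n : [0,T] → ℝ, v ∈ ℝ and K ≥ 0. Then there exists a solution (I, V) of the Skorohod system for (f, v, K); moreover, setting m_i(t) := sup_{0 ≤ s ≤ t} max(−(f_i(s) + I(s)), 0) and x_i := f_i + I + m_i, one has x_i(t) ≥ 0 for all t ∈ [0,T], and the Lebesgue–Stieltjes measure induced by m_i assigns zero mass to {s ∈ [0,T] : x_i(s) > 0}, for each i = 1, …, n. -/

import Mathlib

/-! The reflection map `g ↦ mf g` is causal and `1`-Lipschitz for the sup norm on `[0, t]`, so the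
drift `V(I) = -v + (K/n) ∑ᵢ mf (fᵢ + I)` is a causal `K`-Lipschitz functional of `I`. For the
Picard map `I ↦ ∫₀ᵗ V(I)` this gives the bound `(K t)ᵏ / k!` on the distance of `k`-th iterates,
so some iterate is a contraction of `C([0, T])` and the Picard map has a fixed point.

Each `mᵢ ≥ -(fᵢ + I)`, whence `xᵢ ≥ 0`. Moreover `mᵢ` is constant on every interval where `xᵢ > 0`:
a new running maximum of `-(fᵢ + I)` reached at a time `u` with `xᵢ(u) > 0` would have to be `0`.
Hence the Stieltjes measure of `mᵢ` vanishes near every point of `{xᵢ > 0}`. -/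

open Set MeasureTheory

/-- The Skorohod reflection term: `m_f(t) = sup_{0 ≤ s ≤ t} max(-f(s), 0)`. -/
noncomputable def mf (f : ℝ → ℝ) (t : ℝ) : ℝ :=
  sSup ((fun s => max (-f s) 0) '' Set.Icc 0 t)

/-- `(I, V)` is a solution of the multiparticle Skorohod system for data `(f, v, K)`:
with `m_i(t) = sup_{0 ≤ s ≤ t} max(-(f_i(s) + I(s)), 0)`, one has
`V(t) = -v + (K/n) ∑ᵢ m_i(t)` and `I(t) = ∫₀ᵗ V(s) ds` on `[0,T]`. -/
def IsSkorohodSystemSol (T : ℝ) (n : ℕ) (f : Fin n → ℝ → ℝ) (v K : ℝ)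
    (I V : ℝ → ℝ) : Prop :=
  ContinuousOn I (Set.Icc 0 T) ∧ ContinuousOn V (Set.Icc 0 T) ∧
  (∀ t ∈ Set.Icc 0 T,
    V t = -v + (K / (n : ℝ)) * ∑ i, mf (fun s => f i s + I s) t) ∧
  (∀ t ∈ Set.Icc 0 T, I t = ∫ s in (0:ℝ)..t, V s)

open Filter Topology
open scoped Nat

section ReflectionMap

variable {g g' : ℝ → ℝ} {s t c d T : ℝ}

theorem bddAbove_image_max_neg_zero (hg : ContinuousOn g (Icc 0 t)) :
    BddAbove ((fun s => max (-g s) 0) '' Icc 0 t) :=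
  isCompact_Icc.bddAbove_image (by fun_prop)

theorem le_mf (hg : ContinuousOn g (Icc 0 t)) (hs : s ∈ Icc 0 t) : max (-g s) 0 ≤ mf g t :=
  le_csSup (bddAbove_image_max_neg_zero hg) (mem_image_of_mem _ hs)

theorem mf_le (ht : 0 ≤ t) (h : ∀ s ∈ Icc 0 t, max (-g s) 0 ≤ c) : mf g t ≤ c :=
  csSup_le ((nonempty_Icc.2 ht).image _) (forall_mem_image.2 h)

theorem mf_nonneg (hg : ContinuousOn g (Icc 0 t)) (ht : 0 ≤ t) : 0 ≤ mf g t :=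
  (le_max_right _ _).trans (le_mf hg ⟨ht, le_rfl⟩)

theorem add_mf_nonneg (hg : ContinuousOn g (Icc 0 t)) (ht : 0 ≤ t) : 0 ≤ g t + mf g t := by
  linarith [le_max_left (-g t) 0, le_mf hg ⟨ht, le_rfl⟩]

theorem mf_monotoneOn (hg : ContinuousOn g (Icc 0 T)) : MonotoneOn (mf g) (Icc 0 T) :=
  fun _ hs _ ht hst =>
    csSup_le_csSup (bddAbove_image_max_neg_zero (hg.mono (Icc_subset_Icc_right ht.2)))
      ((nonempty_Icc.2 hs.1).image _) (image_mono (Icc_subset_Icc_right hst))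

theorem mf_le_mf_add (hg' : ContinuousOn g' (Icc 0 t)) (ht : 0 ≤ t)
    (h : ∀ s ∈ Icc 0 t, |g s - g' s| ≤ c) : mf g t ≤ mf g' t + c := by
  refine mf_le ht fun s hs => ?_
  have hneg : |-g s - -g' s| ≤ c := by rw [neg_sub_neg, abs_sub_comm]; exact h s hs
  have hmax := abs_le.1 ((abs_max_sub_max_le_abs (-g s) (-g' s) 0).trans hneg)
  linarith [le_mf hg' hs]

theorem abs_mf_sub_mf_le (hg : ContinuousOn g (Icc 0 t)) (hg' : ContinuousOn g' (Icc 0 t))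
    (ht : 0 ≤ t) (h : ∀ s ∈ Icc 0 t, |g s - g' s| ≤ c) : |mf g t - mf g' t| ≤ c :=
  abs_sub_le_iff.2 ⟨by linarith [mf_le_mf_add hg' ht h],
    by linarith [mf_le_mf_add hg ht fun s hs => abs_sub_comm (g' s) (g s) ▸ h s hs]⟩

theorem mf_eq_sSup_image_Icc_zero_one (ht : 0 ≤ t) :
    mf g t = sSup ((fun r => max (-g (r * t)) 0) '' Icc 0 1) := by
  have : Icc 0 t = (· * t) '' Icc 0 1 := by
    rw [image_mul_right_Icc zero_le_one ht, zero_mul, one_mul]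
  rw [mf, this, image_image]

theorem mf_continuousOn (hg : ContinuousOn g (Icc 0 T)) : ContinuousOn (mf g) (Icc 0 T) := by
  rcases lt_or_ge T 0 with hT | hT
  · simp [Icc_eq_empty_of_lt hT]
  -- replace `g` by a continuous extension, so that the supremum over `[0, 1]` is jointly continuous
  set G := IccExtend hT ((Icc 0 T).domRestrict g)
  have hG : Continuous G := continuous_IccExtend_iff.2 hg.domRestrict
  refine (isCompact_Icc.continuous_sSup (f := fun t r => max (-G (r * t)) 0) (K := Icc 0 1)
    (by fun_prop)).continuousOn.congr fun t ht => ?_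
  rw [mf_eq_sSup_image_Icc_zero_one ht.1]
  refine congrArg sSup (image_congr fun r hr => ?_)
  have hrt : r * t ∈ Icc 0 T :=
    ⟨mul_nonneg hr.1 ht.1, (mul_le_of_le_one_left ht.1 hr.2).trans ht.2⟩
  simp [G, IccExtend_of_mem _ _ hrt]

theorem mf_eq_of_le_of_pos (hg : ContinuousOn g (Icc 0 d)) (hc : 0 ≤ c) (hcd : c ≤ d)
    (hpos : ∀ u ∈ Icc c d, 0 < g u + mf g u) : mf g c = mf g d := by
  have hmono := mf_monotoneOn hg
  obtain ⟨u, hu, hmax⟩ := isCompact_Icc.exists_sSup_image_eq (nonempty_Icc.2 (hc.trans hcd))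
    (by fun_prop : ContinuousOn (fun s => max (-g s) 0) (Icc 0 d))
  change mf g d = max (-g u) 0 at hmax
  refine le_antisymm (hmono ⟨hc, hcd⟩ ⟨hc.trans hcd, le_rfl⟩ hcd) ?_
  rcases le_or_gt u c with huc | hcu
  · exact hmax ▸ le_mf (hg.mono (Icc_subset_Icc_right hcd)) ⟨hu.1, huc⟩
  -- a maximum of `-g` attained in `(c, d]`, where `g + mf g > 0`, can only be the value `0`
  have hmu : mf g u = mf g d := le_antisymm (hmono ⟨hu.1, hu.2⟩ ⟨hu.1.trans hu.2, le_rfl⟩ hu.2)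
    (hmax ▸ le_mf (hg.mono (Icc_subset_Icc_right hu.2)) ⟨hu.1, le_rfl⟩)
  have hpu := hpos u ⟨hcu.le, hu.2⟩
  have hzero : mf g d = 0 := by
    rcases max_cases (-g u) 0 with ⟨h, _⟩ | ⟨h, _⟩ <;> linarith
  exact hzero ▸ mf_nonneg (hg.mono (Icc_subset_Icc_right hcd)) hc

theorem mf_eq_of_pos_on_uIcc (hg : ContinuousOn g (Icc 0 T)) (hc : c ∈ Icc 0 T)
    (hd : d ∈ Icc 0 T) (hpos : ∀ u ∈ uIcc c d, 0 < g u + mf g u) : mf g c = mf g d := by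
  wlog hcd : c ≤ d generalizing c d
  · exact (this hd hc (uIcc_comm c d ▸ hpos) (le_of_not_ge hcd)).symm
  exact mf_eq_of_le_of_pos (hg.mono (Icc_subset_Icc_right hd.2)) hc.1 hcd
    (uIcc_of_le hcd ▸ hpos)

end ReflectionMap

theorem StieltjesFunction.measure_eq_zero_of_eventually_eq (S : StieltjesFunction ℝ) {A : Set ℝ}
    (h : ∀ x ∈ A, ∀ᶠ y in 𝓝 x, S y = S x) : S.measure A = 0 := by
  refine measure_null_of_locally_null A fun x hx => ?_
  obtain ⟨ε, hε, hball⟩ := Metric.eventually_nhds_iff_ball.1 (h x hx)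
  refine ⟨Ioc (x - ε / 2) (x + ε / 2),
    mem_nhdsWithin_of_mem_nhds (Ioc_mem_nhds (by linarith) (by linarith)), ?_⟩
  rw [S.measure_Ioc, hball (x + ε / 2) ?_, hball (x - ε / 2) ?_, sub_self, ENNReal.ofReal_zero]
    <;> rw [Metric.mem_ball, Real.dist_eq, abs_lt] <;> constructor <;> linarith

section ReflectionMeasure

variable {g : ℝ → ℝ} {T : ℝ}

noncomputable def mfStieltjes (hT : 0 ≤ T) (hg : ContinuousOn g (Icc 0 T)) :
    StieltjesFunction ℝ where
  toFun := IccExtend hT ((Icc 0 T).domRestrict (mf g))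
  mono' := Monotone.IccExtend _ fun a b hab => mf_monotoneOn hg a.2 b.2 hab
  right_continuous' _ :=
    (continuous_IccExtend_iff.2 (mf_continuousOn hg).domRestrict).continuousWithinAt

theorem mfStieltjes_apply (hT : 0 ≤ T) (hg : ContinuousOn g (Icc 0 T)) (t : ℝ) :
    mfStieltjes hT hg t = mf g (min (max t 0) T) := by
  change mf g (max 0 (min T t)) = _
  rw [max_min_distrib_left, max_eq_right hT, min_comm, max_comm]

theorem mfStieltjes_measure_pos_eq_zero (hT : 0 ≤ T) (hg : ContinuousOn g (Icc 0 T)) :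
    (mfStieltjes hT hg).measure {s | s ∈ Icc 0 T ∧ 0 < g s + mf g s} = 0 := by
  refine StieltjesFunction.measure_eq_zero_of_eventually_eq _ fun s₀ ⟨hs₀, hpos⟩ => ?_
  have hx : ContinuousOn (fun u => g u + mf g u) (Icc 0 T) := hg.add (mf_continuousOn hg)
  obtain ⟨U, hU, hs₀U, hUpos⟩ := mem_nhdsWithin.1 (hx s₀ hs₀ (Ioi_mem_nhds hpos))
  obtain ⟨a, b, hs₀ab, hab, habU⟩ := exists_Icc_mem_subset_of_mem_nhds (hU.mem_nhds hs₀U)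
  filter_upwards [hab] with y hy
  have hproj : (projIcc 0 T hT y : ℝ) ∈ Icc a b ∩ Icc 0 T :=
    ⟨⟨le_max_of_le_right (le_min (hs₀ab.1.trans hs₀.2) hy.1),
      max_le (hs₀.1.trans hs₀ab.2) ((min_le_right _ _).trans hy.2)⟩,
      (projIcc 0 T hT y).2⟩
  change mf g (projIcc 0 T hT y) = mf g (projIcc 0 T hT s₀)
  rw [projIcc_of_mem hT hs₀]
  refine mf_eq_of_pos_on_uIcc hg hproj.2 hs₀ fun u hu => ?_
  obtain ⟨huab, hu0T⟩ := (ordConnected_Icc.inter ordConnected_Icc).uIcc_subset hproj ⟨hs₀ab, hs₀⟩ hu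
  exact hUpos ⟨habU huab, hu0T⟩

end ReflectionMeasure

theorem integral_mul_pow_div_factorial_mul (K D x : ℝ) (k : ℕ) :
    ∫ s in (0 : ℝ)..x, K * ((K * s) ^ k / k ! * D) = (K * x) ^ (k + 1) / (k + 1)! * D := by
  have hfun : ∀ s : ℝ, K * ((K * s) ^ k / k ! * D) = K ^ (k + 1) * D / k ! * s ^ k := by
    intro s; ring
  simp_rw [hfun, intervalIntegral.integral_const_mul, integral_pow, Nat.factorial_succ]
  push_cast
  field_simp
  ring

section CausalVolterra

def IsCausalLipschitzOn (T K : ℝ) (F : (ℝ → ℝ) → ℝ → ℝ) : Prop :=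
  ∀ I₁ I₂, Continuous I₁ → Continuous I₂ → ∀ s ∈ Icc 0 T, ∀ c,
    (∀ u ∈ Icc 0 s, |I₁ u - I₂ u| ≤ c) → |F I₁ s - F I₂ s| ≤ K * c

variable {T K : ℝ} {F : (ℝ → ℝ) → ℝ → ℝ}

noncomputable def volterraMap (hT : 0 ≤ T) (hF : ∀ I, Continuous I → ContinuousOn (F I) (Icc 0 T))
    (J : C(Icc 0 T, ℝ)) : C(Icc 0 T, ℝ) where
  toFun x := ∫ s in (0 : ℝ)..x, F (IccExtend hT J) s
  continuous_toFun := by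
    have := intervalIntegral.continuousOn_primitive_interval (μ := volume) (a := 0) (b := T)
      ((hF (IccExtend hT J) (continuous_IccExtend_iff.2 J.continuous)).integrableOn_Icc.mono_set
        (uIcc_of_le hT).subset)
    exact (uIcc_of_le hT ▸ this).domRestrict

variable (hT : 0 ≤ T) (hF : ∀ I, Continuous I → ContinuousOn (F I) (Icc 0 T))

theorem abs_volterraMap_sub_le (hF_lip : IsCausalLipschitzOn T K F) (A B : C(Icc 0 T, ℝ))
    (x : Icc 0 T) {c : ℝ → ℝ} (hc : Continuous c)
    (hAB : ∀ s ∈ Icc 0 (x : ℝ), ∀ u : Icc 0 T, (u : ℝ) ≤ s → |A u - B u| ≤ c s) :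
    |volterraMap hT hF A x - volterraMap hT hF B x| ≤ ∫ s in (0 : ℝ)..x, K * c s := by
  have hcont : ∀ J : C(Icc 0 T, ℝ), Continuous (IccExtend hT J) :=
    fun J => continuous_IccExtend_iff.2 J.continuous
  have hint : ∀ J : C(Icc 0 T, ℝ), IntervalIntegrable (F (IccExtend hT J)) volume 0 x :=
    fun J => ((hF _ (hcont J)).mono
      (uIcc_of_le x.2.1 ▸ Icc_subset_Icc_right x.2.2)).intervalIntegrable
  change |(∫ s in (0 : ℝ)..x, _) - ∫ s in (0 : ℝ)..x, _| ≤ _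
  rw [← intervalIntegral.integral_sub (hint A) (hint B)]
  refine (intervalIntegral.abs_integral_le_integral_abs x.2.1).trans
    (intervalIntegral.integral_mono_on x.2.1 ((hint A).sub (hint B)).abs
      ((hc.const_mul K).intervalIntegrable _ _) fun s hs => ?_)
  have hsT : s ∈ Icc 0 T := ⟨hs.1, hs.2.trans x.2.2⟩
  refine hF_lip _ _ (hcont A) (hcont B) s hsT (c s) fun u hu => ?_
  have huT : u ∈ Icc 0 T := ⟨hu.1, hu.2.trans hsT.2⟩
  rw [IccExtend_of_mem _ _ huT, IccExtend_of_mem _ _ huT]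
  exact hAB s hs ⟨u, huT⟩ hu.2

theorem abs_iterate_volterraMap_sub_le (hK : 0 ≤ K) (hF_lip : IsCausalLipschitzOn T K F)
    (A B : C(Icc 0 T, ℝ)) (k : ℕ) (x : Icc 0 T) :
    |(volterraMap hT hF)^[k] A x - (volterraMap hT hF)^[k] B x|
      ≤ (K * x) ^ k / k ! * dist A B := by
  induction k generalizing x with
  | zero => simpa [← Real.dist_eq] using ContinuousMap.dist_apply_le_dist x
  | succ k ih =>
    rw [Function.iterate_succ_apply', Function.iterate_succ_apply',
      ← integral_mul_pow_div_factorial_mul]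
    refine abs_volterraMap_sub_le hT hF hF_lip _ _ x (by fun_prop) fun s hs u hus => ?_
    refine (ih u).trans ?_
    have hu : 0 ≤ K * u := mul_nonneg hK u.2.1
    gcongr

theorem exists_isFixedPt_volterraMap (hK : 0 ≤ K) (hF_lip : IsCausalLipschitzOn T K F) :
    ∃ J, Function.IsFixedPt (volterraMap hT hF) J := by
  obtain ⟨N, hN⟩ := (FloorSemiring.tendsto_pow_div_factorial_atTop (K * T)).eventually
    (gt_mem_nhds zero_lt_one) |>.exists
  have hKT : 0 ≤ K * T := mul_nonneg hK hT
  have hC : 0 ≤ (K * T) ^ N / N ! := by positivity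
  have hcontr : ContractingWith ⟨_, hC⟩ (volterraMap hT hF)^[N] := by
    refine ⟨hN, LipschitzWith.of_dist_le_mul fun A B => ?_⟩
    change _ ≤ (K * T) ^ N / N ! * dist A B
    rw [ContinuousMap.dist_le (by positivity)]
    intro x
    refine (abs_iterate_volterraMap_sub_le hT hF hK hF_lip A B N x).trans ?_
    have hx : 0 ≤ K * x := mul_nonneg hK x.2.1
    gcongr
    exact x.2.2
  exact ⟨_, hcontr.isFixedPt_fixedPoint_iterate⟩

end CausalVolterra

theorem exists_continuous_eq_integral_of_isCausalLipschitzOn {T K : ℝ} {F : (ℝ → ℝ) → ℝ → ℝ}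
    (hT : 0 ≤ T) (hK : 0 ≤ K) (hF : ∀ I, Continuous I → ContinuousOn (F I) (Icc 0 T))
    (hF_lip : IsCausalLipschitzOn T K F) :
    ∃ I : ℝ → ℝ, Continuous I ∧ ∀ t ∈ Icc 0 T, I t = ∫ s in (0 : ℝ)..t, F I s := by
  obtain ⟨J, hJ⟩ := exists_isFixedPt_volterraMap hT hF hK hF_lip
  refine ⟨IccExtend hT J, continuous_IccExtend_iff.2 J.continuous, fun t ht => ?_⟩
  rw [IccExtend_of_mem _ _ ht]
  exact (DFunLike.congr_fun hJ ⟨t, ht⟩).symm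

noncomputable def skorohodDrift (n : ℕ) (f : Fin n → ℝ → ℝ) (v K : ℝ) (I : ℝ → ℝ) (t : ℝ) : ℝ :=
  -v + (K / n) * ∑ i, mf (fun s => f i s + I s) t

section SkorohodDrift

variable {n : ℕ} {f : Fin n → ℝ → ℝ} {v K T : ℝ}

theorem continuousOn_skorohodDrift (hf : ∀ i, ContinuousOn (f i) (Icc 0 T)) {I : ℝ → ℝ}
    (hI : ContinuousOn I (Icc 0 T)) : ContinuousOn (skorohodDrift n f v K I) (Icc 0 T) :=
  continuousOn_const.add (continuousOn_const.mul
    (continuousOn_finsetSum _ fun i _ => mf_continuousOn ((hf i).add hI)))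

theorem isCausalLipschitzOn_skorohodDrift (hK : 0 ≤ K) (hf : ∀ i, ContinuousOn (f i) (Icc 0 T)) :
    IsCausalLipschitzOn T K (skorohodDrift n f v K) := by
  intro I₁ I₂ hI₁ hI₂ s hs c hc
  have hcont : ∀ (I : ℝ → ℝ) i, Continuous I → ContinuousOn (fun u => f i u + I u) (Icc 0 s) :=
    fun I i hI => ((hf i).add hI.continuousOn).mono (Icc_subset_Icc_right hs.2)
  have hterm : ∀ i, |mf (fun u => f i u + I₁ u) s - mf (fun u => f i u + I₂ u) s| ≤ c :=
    fun i => abs_mf_sub_mf_le (hcont I₁ i hI₁) (hcont I₂ i hI₂) hs.1 fun u hu => by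
      simpa only [add_sub_add_left_eq_sub] using hc u hu
  have hc0 : 0 ≤ c := (abs_nonneg _).trans (hc s ⟨hs.1, le_rfl⟩)
  calc |skorohodDrift n f v K I₁ s - skorohodDrift n f v K I₂ s|
      = K / n * |∑ i, (mf (fun u => f i u + I₁ u) s - mf (fun u => f i u + I₂ u) s)| := by
        rw [skorohodDrift, skorohodDrift, Finset.sum_sub_distrib, add_sub_add_left_eq_sub,
          ← mul_sub, abs_mul, abs_of_nonneg (by positivity)]
    _ ≤ K / n * (n * c) := by
        gcongr
        refine (Finset.abs_sum_le_sum_abs _ _).trans ?_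
        simpa using Finset.sum_le_sum fun i (_ : i ∈ Finset.univ) => hterm i
    _ ≤ K * c := by
        rcases n.eq_zero_or_pos with rfl | hn
        · simpa using mul_nonneg hK hc0
        · rw [← mul_assoc, div_mul_cancel₀ _ (by positivity)]

end SkorohodDrift

theorem stmt_6_general (T : ℝ) (hT : 0 < T) (n : ℕ)
    (f : Fin n → ℝ → ℝ) (hf : ∀ i, ContinuousOn (f i) (Set.Icc 0 T))
    (v K : ℝ) (hK : 0 ≤ K) :
    ∃ I V : ℝ → ℝ, IsSkorohodSystemSol T n f v K I V ∧
      ∀ i : Fin n,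
        (∀ t ∈ Set.Icc 0 T, 0 ≤ f i t + I t + mf (fun s => f i s + I s) t) ∧
        ∃ S : StieltjesFunction ℝ,
          (∀ t : ℝ, S t = mf (fun s => f i s + I s) (min (max t 0) T)) ∧
          S.measure
            {s | s ∈ Set.Icc 0 T ∧
              0 < f i s + I s + mf (fun u => f i u + I u) s} = 0 := by
  obtain ⟨I, hI, hI_eq⟩ := exists_continuous_eq_integral_of_isCausalLipschitzOn hT.le hK
    (fun _ hI => continuousOn_skorohodDrift (v := v) (K := K) hf hI.continuousOn)
    (isCausalLipschitzOn_skorohodDrift hK hf)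
  have hx : ∀ i, ContinuousOn (fun s => f i s + I s) (Icc 0 T) :=
    fun i => (hf i).add hI.continuousOn
  refine ⟨I, skorohodDrift n f v K I,
    ⟨hI.continuousOn, continuousOn_skorohodDrift hf hI.continuousOn, fun _ _ => rfl, hI_eq⟩,
    fun i => ⟨fun t ht => ?_, mfStieltjes hT.le (hx i), mfStieltjes_apply hT.le (hx i),
      mfStieltjes_measure_pos_eq_zero hT.le (hx i)⟩⟩
  exact add_mf_nonneg ((hx i).mono (Icc_subset_Icc_right ht.2)) ht.1

/-- Existence for the multiparticle Skorohod system: a solution `(I, V)` exists, the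
reflected paths `x_i = f_i + I + m_i` are nonnegative on `[0,T]`, and each `m_i` is flat
off `{s : x_i(s) = 0}`, i.e. its Lebesgue–Stieltjes measure gives zero mass to
`{s ∈ [0,T] : x_i(s) > 0}`. -/
theorem stmt_6 (T : ℝ) (hT : 0 < T) (n : ℕ) (hn : 1 ≤ n)
    (f : Fin n → ℝ → ℝ) (hf : ∀ i, ContinuousOn (f i) (Set.Icc 0 T))
    (v K : ℝ) (hK : 0 ≤ K) :
    ∃ I V : ℝ → ℝ, IsSkorohodSystemSol T n f v K I V ∧
      ∀ i : Fin n,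
        (∀ t ∈ Set.Icc 0 T, 0 ≤ f i t + I t + mf (fun s => f i s + I s) t) ∧
        ∃ S : StieltjesFunction ℝ,
          (∀ t : ℝ, S t = mf (fun s => f i s + I s) (min (max t 0) T)) ∧
          S.measure
            {s | s ∈ Set.Icc 0 T ∧
              0 < f i s + I s + mf (fun u => f i u + I u) s} = 0 :=
  stmt_6_general T hT n f hf v K hK
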